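/- Let ξ : Q → ℝ be measurable on a measure space Q and ρ : Q → ℝ measurable with 0 ≤ ρ ≤ 1 a.e. If ∫_Q ξ·(ρ − z) ≥ 0 for every measurable z with 0 ≤ z ≤ 1 a.e. and ξ·(ρ−z) integrable, then ξ(x) ∈ ∂I_{[0,1]}(ρ(x)) for a.e. x ∈ Q, i.e., a.e. ξ ≤ 0 where ρ = 0, ξ = 0 where 0 < ρ < 1, and ξ ≥ 0 where ρ = 1. -/

import Mathlib

/-!
Test the inequality with `z = ρ + t (1 - ρ)`, where `t = min (max ξ 0) 1`. This `z` takes values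
in `[0, 1]`, and `ξ (ρ - z) = -ξ t (1 - ρ)` is nonpositive and dominated by `ξ²`, hence integrable
since `ξ ∈ L²`. A nonpositive integrable function with nonnegative integral vanishes a.e., so
`ρ = 1` a.e. where `ξ > 0`. The reflection `(ξ, ρ, z) ↦ (-ξ, 1 - ρ, 1 - z)` preserves the
inequality and gives `ρ = 0` a.e. where `ξ < 0`.
-/

open MeasureTheory

lemma mul_min_max_zero_one_nonneg (a : ℝ) : 0 ≤ a * min (max a 0) 1 := by
  rcases le_total a 0 with ha | ha
  · simp [max_eq_right ha]
  · exact mul_nonneg ha (le_min (le_max_right _ _) zero_le_one)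

lemma mul_min_max_zero_one_le_sq (a : ℝ) : a * min (max a 0) 1 ≤ a ^ 2 := by
  rcases le_total a 0 with ha | ha
  · simp [max_eq_right ha]
    positivity
  · rw [max_eq_left ha, sq]
    exact mul_le_mul_of_nonneg_left (min_le_left _ _) ha

lemma mul_min_max_zero_one_pos {a : ℝ} (ha : 0 < a) : 0 < a * min (max a 0) 1 := by
  rw [max_eq_left ha.le]
  positivity

/-- `ξ ∈ ∂I_K(ρ)` for `K` the functions with values in `[0, 1]`, paired against `ρ - z` only when
that pairing is integrable. -/
def InNormalConeUnitInterval {Q : Type*} [MeasurableSpace Q] (μ : Measure Q) (ξ ρ : Q → ℝ) :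
    Prop :=
  ∀ z : Q → ℝ, Measurable z → (∀ᵐ x ∂μ, 0 ≤ z x ∧ z x ≤ 1) →
    Integrable (fun x => ξ x * (ρ x - z x)) μ → 0 ≤ ∫ x, ξ x * (ρ x - z x) ∂μ

namespace InNormalConeUnitInterval

variable {Q : Type*} [MeasurableSpace Q] {μ : Measure Q} {ξ ρ : Q → ℝ}

lemma neg_one_sub (h : InNormalConeUnitInterval μ ξ ρ) :
    InNormalConeUnitInterval μ (-ξ) (1 - ρ) := by
  intro z hz hz01 hint
  have hreflect : (fun x => (-ξ) x * ((1 - ρ) x - z x)) =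
      fun x => ξ x * (ρ x - (1 - z) x) := by
    funext x
    simp only [Pi.neg_apply, Pi.sub_apply, Pi.one_apply]
    ring
  rw [hreflect] at hint ⊢
  refine h (1 - z) (measurable_const.sub hz) ?_ hint
  filter_upwards [hz01] with x hx
  simp only [Pi.sub_apply, Pi.one_apply]
  constructor <;> linarith [hx.1, hx.2]

lemma integral_mul_one_sub_nonpos (h : InNormalConeUnitInterval μ ξ ρ)
    (hρ : AEStronglyMeasurable ρ μ) (hρ01 : ∀ᵐ x ∂μ, 0 ≤ ρ x ∧ ρ x ≤ 1)
    {t : Q → ℝ} (ht : AEStronglyMeasurable t μ) (ht01 : ∀ᵐ x ∂μ, 0 ≤ t x ∧ t x ≤ 1)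
    (hint : Integrable (fun x => ξ x * t x * (1 - ρ x)) μ) :
    ∫ x, ξ x * t x * (1 - ρ x) ∂μ ≤ 0 := by
  set z : Q → ℝ := fun x => hρ.mk ρ x + ht.mk t x * (1 - hρ.mk ρ x)
  have hz : Measurable z := by
    have := hρ.stronglyMeasurable_mk.measurable
    have := ht.stronglyMeasurable_mk.measurable
    fun_prop
  have hpairing : (fun x => ξ x * (ρ x - z x)) =ᵐ[μ] fun x => -(ξ x * t x * (1 - ρ x)) := by
    filter_upwards [hρ.ae_eq_mk, ht.ae_eq_mk] with x hρx htx
    simp only [z, ← hρx, ← htx]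
    ring
  have hz01 : ∀ᵐ x ∂μ, 0 ≤ z x ∧ z x ≤ 1 := by
    filter_upwards [hρ.ae_eq_mk, ht.ae_eq_mk, hρ01, ht01] with x hρx htx hρ01x ht01x
    simp only [z, ← hρx, ← htx]
    constructor <;> nlinarith [hρ01x.1, hρ01x.2, ht01x.1, ht01x.2]
  have := h z hz hz01 (hint.neg.congr hpairing.symm)
  rw [integral_congr_ae hpairing, integral_neg] at this
  linarith

lemma ae_eq_one_of_pos (h : InNormalConeUnitInterval μ ξ ρ) (hξ : MemLp ξ 2 μ)
    (hρ : AEStronglyMeasurable ρ μ) (hρ01 : ∀ᵐ x ∂μ, 0 ≤ ρ x ∧ ρ x ≤ 1) :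
    ∀ᵐ x ∂μ, 0 < ξ x → ρ x = 1 := by
  set t : Q → ℝ := fun x => min (max (ξ x) 0) 1
  set g : Q → ℝ := fun x => ξ x * t x * (1 - ρ x)
  have ht : AEStronglyMeasurable t μ := by
    have := hξ.aestronglyMeasurable
    fun_prop
  have ht01 : ∀ x, 0 ≤ t x ∧ t x ≤ 1 := fun x =>
    ⟨le_min (le_max_right _ _) zero_le_one, min_le_right _ _⟩
  have hg_nonneg : 0 ≤ᵐ[μ] g := by
    filter_upwards [hρ01] with x hρx
    exact mul_nonneg (mul_min_max_zero_one_nonneg (ξ x)) (by linarith [hρx.2])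
  have hg_le_sq : ∀ᵐ x ∂μ, ‖g x‖ ≤ ξ x ^ 2 := by
    filter_upwards [hg_nonneg, hρ01] with x hgx hρx
    rw [Real.norm_of_nonneg hgx]
    calc g x ≤ ξ x * t x * 1 :=
          mul_le_mul_of_nonneg_left (by linarith [hρx.1]) (mul_min_max_zero_one_nonneg (ξ x))
      _ ≤ ξ x ^ 2 := by simpa [t] using mul_min_max_zero_one_le_sq (ξ x)
  have hg_int : Integrable g μ :=
    hξ.integrable_sq.mono'
      ((hξ.aestronglyMeasurable.mul ht).mul (aestronglyMeasurable_const.sub hρ)) hg_le_sq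
  have hg_zero : g =ᵐ[μ] 0 :=
    (integral_eq_zero_iff_of_nonneg_ae hg_nonneg hg_int).1 <| le_antisymm
      (h.integral_mul_one_sub_nonpos hρ hρ01 ht (.of_forall ht01) hg_int)
      (integral_nonneg_of_ae hg_nonneg)
  filter_upwards [hg_zero] with x hgx hξx
  have := (mul_eq_zero.1 hgx).resolve_left (mul_min_max_zero_one_pos hξx).ne'
  linarith

end InNormalConeUnitInterval

theorem stmt_13_general {Q : Type*} [MeasurableSpace Q] (μ : Measure Q)
    (ξ ρ : Q → ℝ) (hξ : MemLp ξ 2 μ) (hρ : MemLp ρ 2 μ)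
    (hρ01 : ∀ᵐ x ∂μ, 0 ≤ ρ x ∧ ρ x ≤ 1)
    (hineq : ∀ z : Q → ℝ, Measurable z → (∀ᵐ x ∂μ, 0 ≤ z x ∧ z x ≤ 1) →
      Integrable (fun x => ξ x * (ρ x - z x)) μ →
      0 ≤ ∫ x, ξ x * (ρ x - z x) ∂μ) :
    ∀ᵐ x ∂μ, (ρ x = 0 → ξ x ≤ 0) ∧ (0 < ρ x → ρ x < 1 → ξ x = 0) ∧
      (ρ x = 1 → 0 ≤ ξ x) := by
  have hnormal : InNormalConeUnitInterval μ ξ ρ := hineq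
  have hpos := hnormal.ae_eq_one_of_pos hξ hρ.aestronglyMeasurable hρ01
  have hneg := hnormal.neg_one_sub.ae_eq_one_of_pos hξ.neg
    (aestronglyMeasurable_const.sub hρ.aestronglyMeasurable)
    (hρ01.mono fun x hx => ⟨by simp [hx.2], by simp [hx.1]⟩)
  filter_upwards [hpos, hneg] with x hposx hnegx
  simp only [Pi.neg_apply, Pi.sub_apply, Pi.one_apply, neg_pos, sub_eq_self] at hnegx
  refine ⟨fun h0 => ?_, fun h0 h1 => ?_, fun h1 => ?_⟩
  · by_contra! hξx
    linarith [hposx hξx]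
  · rcases lt_trichotomy (ξ x) 0 with hξx | hξx | hξx
    · linarith [hnegx hξx]
    · exact hξx
    · linarith [hposx hξx]
  · by_contra! hξx
    linarith [hnegx hξx]

theorem stmt_13 {Q : Type*} [MeasurableSpace Q] (μ : Measure Q) [SigmaFinite μ]
    (ξ ρ : Q → ℝ) (hξ : MemLp ξ 2 μ) (hρ : MemLp ρ 2 μ)
    (hρ01 : ∀ᵐ x ∂μ, 0 ≤ ρ x ∧ ρ x ≤ 1)
    (hineq : ∀ z : Q → ℝ, Measurable z → (∀ᵐ x ∂μ, 0 ≤ z x ∧ z x ≤ 1) →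
      Integrable (fun x => ξ x * (ρ x - z x)) μ →
      0 ≤ ∫ x, ξ x * (ρ x - z x) ∂μ) :
    ∀ᵐ x ∂μ, (ρ x = 0 → ξ x ≤ 0) ∧ (0 < ρ x → ρ x < 1 → ξ x = 0) ∧
      (ρ x = 1 → 0 ≤ ξ x) :=
  stmt_13_general μ ξ ρ hξ hρ hρ01 hineq
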